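/- Let F be an algebraically closed field, α₁, β₁, β₈ ∈ F with α₁ ≠ 0 and β₈ ≠ 0, and let e₁ = (1,0,0) ∈ F^3. Then for all integers k₁, k₂ ≥ 2 and every A ∈ O(F), there exist X, Y ∈ O(F) with A = (α₁, 0; 0, 0)·X^{k₁} + (0, e₁; 0, β₈)·Y^{k₂}. -/

import Mathlib

/-- Zorn vector matrices: the split octonion algebra over `F`. -/
structure Oct (F : Type*) where
  a : F              -- upper-left scalar η
  b : Fin 3 → F      -- upper-right vector x
  c : Fin 3 → F      -- lower-left vector y
  d : F              -- lower-right scalar ζ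

namespace Oct

variable {F : Type*} [Field F]

/-- standard bilinear form on F^3 -/
def dot (x y : Fin 3 → F) : F := x 0 * y 0 + x 1 * y 1 + x 2 * y 2

/-- cross product on F^3, satisfying ⟨x ∧ y, z⟩ = det(x,y,z) -/
def cross (x y : Fin 3 → F) : Fin 3 → F :=
  ![x 1 * y 2 - x 2 * y 1, x 2 * y 0 - x 0 * y 2, x 0 * y 1 - x 1 * y 0]

instance : Add (Oct F) :=
  ⟨fun A B => ⟨A.a + B.a, A.b + B.b, A.c + B.c, A.d + B.d⟩⟩

instance : Mul (Oct F) :=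
  ⟨fun A B =>
    ⟨A.a * B.a + dot A.b B.c,
     A.a • B.b + B.d • A.b + cross A.c B.c,
     A.d • B.c + B.a • A.c + cross A.b B.b,
     A.d * B.d + dot A.c B.b⟩⟩

instance : SMul F (Oct F) :=
  ⟨fun t A => ⟨t * A.a, t • A.b, t • A.c, t * A.d⟩⟩

instance : One (Oct F) := ⟨⟨1, 0, 0, 1⟩⟩

/-- powers, via A^{n+1} = A · A^n (well-defined by power-associativity) -/
def pow (A : Oct F) : ℕ → Oct F
  | 0 => 1
  | n + 1 => A * pow A n

/-- octonion conjugation -/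
def conj (A : Oct F) : Oct F := ⟨A.d, -A.b, -A.c, A.a⟩

/-- the norm form -/
def norm (A : Oct F) : F := A.a * A.d - dot A.b A.c

end Oct

/-!
Left multiplication by `(α₁, 0; 0, 0)` turns `(t, v; 0, ζ)` into `(α₁ t, α₁ v; 0, 0)`, and
left multiplication by `(0, e₁; 0, β₈)` turns `(η, 0; w, s)` into `(w₀, s e₁; β₈ w, β₈ s)`.
So it suffices that `k`-th powers (`k ≥ 1`) realise every top row `(t, v)` with zero
lower-left vector: take the idempotent `(0, v; 0, 1)` if `t = 0`, and `(x, x^{1-k} v; 0, 0)` with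
`x^k = t` otherwise. The automorphism exchanging `η ↔ ζ` and `x ↔ y` transports this to the
bottom row.
-/

namespace Oct

@[ext]
lemma ext {F : Type*} {A B : Oct F} (ha : A.a = B.a) (hb : A.b = B.b) (hc : A.c = B.c)
    (hd : A.d = B.d) : A = B := by
  cases A; cases B; congr

variable {F : Type*} [Field F]

@[simp]
lemma mk_mul_mk (a₁ d₁ a₂ d₂ : F) (b₁ c₁ b₂ c₂ : Fin 3 → F) :
    (⟨a₁, b₁, c₁, d₁⟩ * ⟨a₂, b₂, c₂, d₂⟩ : Oct F) =
      ⟨a₁ * a₂ + dot b₁ c₂, a₁ • b₂ + d₂ • b₁ + cross c₁ c₂,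
        d₁ • c₂ + a₂ • c₁ + cross b₁ b₂, d₁ * d₂ + dot c₁ b₂⟩ := rfl

@[simp]
lemma mk_add_mk (a₁ d₁ a₂ d₂ : F) (b₁ c₁ b₂ c₂ : Fin 3 → F) :
    (⟨a₁, b₁, c₁, d₁⟩ + ⟨a₂, b₂, c₂, d₂⟩ : Oct F) = ⟨a₁ + a₂, b₁ + b₂, c₁ + c₂, d₁ + d₂⟩ := rfl

@[simp]
lemma dot_zero_left (x : Fin 3 → F) : dot 0 x = 0 := by simp [dot]

@[simp]
lemma dot_zero_right (x : Fin 3 → F) : dot x 0 = 0 := by simp [dot]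

@[simp]
lemma cross_zero_left (x : Fin 3 → F) : cross 0 x = 0 := by
  ext i; fin_cases i <;> simp [cross]

@[simp]
lemma cross_zero_right (x : Fin 3 → F) : cross x 0 = 0 := by
  ext i; fin_cases i <;> simp [cross]

@[simp]
lemma cross_self (x : Fin 3 → F) : cross x x = 0 := by
  ext i; fin_cases i <;> simp [cross, mul_comm]

@[simp]
lemma cross_smul_self (t : F) (x : Fin 3 → F) : cross x (t • x) = 0 := by
  ext i; fin_cases i <;> simp [cross] <;> ring

protected lemma mul_one (A : Oct F) : A * 1 = A := by
  obtain ⟨a, b, c, d⟩ := A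
  ext <;> simp [show (1 : Oct F) = ⟨1, 0, 0, 1⟩ from rfl]

lemma pow_succ_of_mul_self {E : Oct F} (h : E * E = E) (n : ℕ) : pow E (n + 1) = E := by
  induction n with
  | zero => exact E.mul_one
  | succ n ih => rw [pow, ih, h]

lemma pow_succ_mk_zero_zero (η : F) (u : Fin 3 → F) (n : ℕ) :
    pow (⟨η, u, 0, 0⟩ : Oct F) (n + 1) = ⟨η ^ (n + 1), η ^ n • u, 0, 0⟩ := by
  induction n with
  | zero => simp [pow, Oct.mul_one]
  | succ n ih =>
    rw [pow, ih, mk_mul_mk]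
    ext <;> simp [smul_smul, pow_succ']

def swap (A : Oct F) : Oct F := ⟨A.d, A.c, A.b, A.a⟩

lemma swap_mul (A B : Oct F) : swap (A * B) = swap A * swap B := rfl

lemma swap_pow (A : Oct F) (n : ℕ) : swap (pow A n) = pow (swap A) n := by
  induction n with
  | zero => rfl
  | succ n ih => rw [pow, pow, swap_mul, ih]

lemma exists_pow_eq_upper_row [IsAlgClosed F] {k : ℕ} (hk : k ≠ 0) (t : F) (v : Fin 3 → F) :
    ∃ X : Oct F, ∃ ζ : F, pow X k = ⟨t, v, 0, ζ⟩ := by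
  obtain ⟨n, rfl⟩ := Nat.exists_eq_succ_of_ne_zero hk
  by_cases ht : t = 0
  · refine ⟨⟨0, v, 0, 1⟩, 1, ?_⟩
    rw [pow_succ_of_mul_self (by ext <;> simp), ht]
  · obtain ⟨x, hx⟩ := IsAlgClosed.exists_pow_nat_eq t n.succ_pos
    have hx₀ : x ≠ 0 := by rintro rfl; simp [← hx] at ht
    refine ⟨⟨x, (x ^ n)⁻¹ • v, 0, 0⟩, 0, ?_⟩
    rw [pow_succ_mk_zero_zero, hx, smul_smul, mul_inv_cancel₀ (pow_ne_zero n hx₀), one_smul]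

lemma exists_pow_eq_lower_row [IsAlgClosed F] {k : ℕ} (hk : k ≠ 0) (w : Fin 3 → F) (s : F) :
    ∃ Y : Oct F, ∃ η : F, pow Y k = ⟨η, 0, w, s⟩ := by
  obtain ⟨X, ζ, hX⟩ := exists_pow_eq_upper_row hk s w
  exact ⟨swap X, ζ, by rw [← swap_pow, hX]; rfl⟩

end Oct

open Oct
theorem stmt_8_general {F : Type*} [Field F] [IsAlgClosed F] (α₁ β₈ : F)
    (hα₁ : α₁ ≠ 0) (hβ₈ : β₈ ≠ 0) (k₁ k₂ : ℕ) (hk₁ : 2 ≤ k₁) (hk₂ : 2 ≤ k₂)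
    (A : Oct F) :
    ∃ X Y : Oct F,
      A = (⟨α₁, 0, 0, 0⟩ : Oct F) * pow X k₁
        + (⟨0, ![1, 0, 0], 0, β₈⟩ : Oct F) * pow Y k₂ := by
  obtain ⟨Y, η, hY⟩ := exists_pow_eq_lower_row (by omega : k₂ ≠ 0) (β₈⁻¹ • A.c) (β₈⁻¹ * A.d)
  obtain ⟨X, ζ, hX⟩ := exists_pow_eq_upper_row (by omega : k₁ ≠ 0)
    (α₁⁻¹ * (A.a - β₈⁻¹ * A.c 0)) (α₁⁻¹ • (A.b - (β₈⁻¹ * A.d) • ![1, 0, 0]))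
  refine ⟨X, Y, ?_⟩
  rw [hX, hY]
  ext : 1 <;> simp [dot, smul_smul, hα₁, hβ₈, -Matrix.smul_cons]

theorem stmt_8 {F : Type*} [Field F] [IsAlgClosed F] (α₁ β₁ β₈ : F)
    (hα₁ : α₁ ≠ 0) (hβ₈ : β₈ ≠ 0) (k₁ k₂ : ℕ) (hk₁ : 2 ≤ k₁) (hk₂ : 2 ≤ k₂)
    (A : Oct F) :
    ∃ X Y : Oct F,
      A = (⟨α₁, 0, 0, 0⟩ : Oct F) * pow X k₁
        + (⟨0, ![1, 0, 0], 0, β₈⟩ : Oct F) * pow Y k₂ :=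
  stmt_8_general α₁ β₈ hα₁ hβ₈ k₁ k₂ hk₁ hk₂ A
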